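/- arXiv:1306.1438 — 7 statements merged into one kernel-verified Lean document; each statement's English description precedes it below -/
import Mathlib

section
/- For s < -1 and r = -1/s ∈ (0,1), with b_r = (1-r)^{1/(1-r)}, the function p_a(x) = a/(b_r - a x)^r for x ∈ [0, b_r/a] (and 0 otherwise) is a probability density on ℝ for every a > 0. -/
open MeasureTheory

/-- `r = -1/s`. -/
noncomputable def rOf (s : ℝ) : ℝ := -1 / s

/-- `b_r = (1-r)^{1/(1-r)}`. -/
noncomputable def bOf (r : ℝ) : ℝ := (1 - r) ^ ((1 : ℝ) / (1 - r))

/-- The candidate density `p_a(x) = a (b_r - a x)^{-r} 1_{[0, b_r/a]}(x)`. -/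
noncomputable def pa (s a : ℝ) (x : ℝ) : ℝ :=
  Set.indicator (Set.Icc 0 (bOf (rOf s) / a))
    (fun x => a * (bOf (rOf s) - a * x) ^ (-(rOf s))) x

/-- For `s < -1` (so `r = -1/s ∈ (0,1)`), `p_a` is a probability density on ℝ for every
`a > 0`: it is nonnegative and integrates to 1. -/
theorem pa_is_density (s : ℝ) (hs : s < -1) (a : ℝ) (ha : 0 < a) :
    (∀ x, 0 ≤ pa s a x) ∧ (∫ x, pa s a x = 1) := by
  have hs0 : s < 0 := by linarith
  set r : ℝ := rOf s with hrdef
  have hr0 : 0 < r := by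
    rw [hrdef, rOf]
    exact div_pos_of_neg_of_neg (by norm_num) hs0
  have hr1 : r < 1 := by
    rw [hrdef, rOf, show (-1 : ℝ) / s = 1 / (-s) by ring, div_lt_one (by linarith)]
    linarith
  have h1r : 0 < 1 - r := by linarith
  set b : ℝ := bOf r with hbdef
  have hbpos : 0 < b := Real.rpow_pos_of_pos h1r _
  have hba : 0 ≤ b / a := by positivity
  constructor
  · intro x
    apply Set.indicator_nonneg
    intro y hy
    have hby : 0 ≤ b - a * y := by
      have := hy.2
      have : a * y ≤ b := by
        rw [le_div_iff₀ ha] at this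
        linarith [this]
      linarith
    exact mul_nonneg ha.le (Real.rpow_nonneg hby _)
  · simp only [pa, ← hrdef, ← hbdef]
    rw [MeasureTheory.integral_indicator measurableSet_Icc,
      MeasureTheory.integral_Icc_eq_integral_Ioc,
      ← intervalIntegral.integral_of_le hba,
      intervalIntegral.integral_const_mul]
    rw [intervalIntegral.integral_comp_sub_mul (fun x => x ^ (-r)) (ne_of_gt ha) b]
    rw [mul_div_cancel₀ _ (ne_of_gt ha), sub_self, mul_zero, sub_zero]
    rw [integral_rpow (Or.inl (by linarith))]
    have hnz : -r + 1 ≠ 0 := by linarith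
    rw [Real.zero_rpow hnz]
    have hb1r : b ^ (-r + 1) = 1 - r := by
      rw [hbdef, bOf, ← Real.rpow_mul h1r.le]
      rw [show (1:ℝ) / (1 - r) * (-r + 1) = 1 by field_simp; ring]
      exact Real.rpow_one _
    rw [hb1r]
    rw [smul_eq_mul]
    field_simp
    ring
end

section
/- For s < -1, given data points 0 < X_1, …, X_n, the log-likelihood ℓ_n(a) = Σ_{i=1}^n (log a − r log(b_r − a X_i)) (with r = −1/s, b_r = (1−r)^{1/(1−r)}) tends to +∞ as a ↑ b_r / max_i X_i. Consequently the maximum likelihood estimator over the class of s-concave densities does not exist for s < −1. -/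
open MeasureTheory Filter

/-- `s`-concavity (via generalized means of order `s`, `s ≠ 0`; for `s = 0` the geometric
mean is used) for a nonnegative function `p` on ℝ. -/
def IsSConc (s : ℝ) (p : ℝ → ℝ) : Prop :=
  ∀ x y θ : ℝ, 0 ≤ θ → θ ≤ 1 → 0 < p x → 0 < p y →
    (s = 0 → p x ^ (1 - θ) * p y ^ θ ≤ p ((1 - θ) * x + θ * y)) ∧
    (s ≠ 0 → ((1 - θ) * p x ^ s + θ * p y ^ s) ^ (1 / s) ≤ p ((1 - θ) * x + θ * y))

/-- The class `P_s` of `s`-concave probability densities on ℝ. -/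
def Ps (s : ℝ) : Set (ℝ → ℝ) :=
  {p | (∀ x, 0 ≤ p x) ∧ (∫ x, p x = 1) ∧ IsSConc s p}

/-- The candidate density `p_a`. -/
noncomputable def pdens (s a : ℝ) : ℝ → ℝ :=
  Set.indicator (Set.Icc 0 (bOf (rOf s) / a))
    (fun x => a * (bOf (rOf s) - a * x) ^ (-(rOf s)))

lemma rOf_pos {s : ℝ} (hs : s < -1) : 0 < rOf s := by
  have hs0 : s < 0 := by linarith
  unfold rOf
  exact div_pos_of_neg_of_neg (by norm_num) hs0

lemma rOf_lt_one {s : ℝ} (hs : s < -1) : rOf s < 1 := by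
  have hs0 : s < 0 := by linarith
  unfold rOf
  rw [div_lt_iff_of_neg hs0]
  linarith

lemma bOf_pos {s : ℝ} (hs : s < -1) : 0 < bOf (rOf s) := by
  have := rOf_lt_one hs
  unfold bOf
  exact Real.rpow_pos_of_pos (by linarith) _

lemma pdens_eq {s a x : ℝ} (hs : s < -1) (ha : 0 < a) (hx0 : 0 ≤ x)
    (hx : a * x < bOf (rOf s)) :
    pdens s a x = a * (bOf (rOf s) - a * x) ^ (-(rOf s)) := by
  have hxle : x ≤ bOf (rOf s) / a := le_of_lt ((lt_div_iff₀' ha).mpr hx)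
  unfold pdens
  rw [Set.indicator_of_mem
    (show x ∈ Set.Icc 0 (bOf (rOf s) / a) from ⟨hx0, hxle⟩)]

lemma pdens_pos {s a x : ℝ} (hs : s < -1) (ha : 0 < a) (hx0 : 0 ≤ x)
    (hx : a * x < bOf (rOf s)) : 0 < pdens s a x := by
  rw [pdens_eq hs ha hx0 hx]
  exact mul_pos ha (Real.rpow_pos_of_pos (by linarith) _)

lemma pdens_log {s a x : ℝ} (hs : s < -1) (ha : 0 < a) (hx0 : 0 ≤ x)
    (hx : a * x < bOf (rOf s)) :
    Real.log (pdens s a x)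
      = Real.log a - rOf s * Real.log (bOf (rOf s) - a * x) := by
  have hu : (0:ℝ) < bOf (rOf s) - a * x := by linarith
  rw [pdens_eq hs ha hx0 hx, Real.log_mul (ne_of_gt ha)
      (ne_of_gt (Real.rpow_pos_of_pos hu _)), Real.log_rpow hu]
  ring

lemma pdens_mem {s a : ℝ} (hs : s < -1) (ha : 0 < a) : pdens s a ∈ Ps s := by
  have hr0 := rOf_pos hs
  have hr1 := rOf_lt_one hs
  have hb := bOf_pos hs
  have hs0 : s ≠ 0 := by intro h; rw [h] at hs; norm_num at hs
  set r := rOf s with hrdef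
  set b := bOf r with hbdef
  refine ⟨?_, ?_, ?_⟩
  · -- nonneg
    intro x
    unfold pdens
    rw [← hrdef, ← hbdef]
    by_cases hmem : x ∈ Set.Icc 0 (b / a)
    · rw [Set.indicator_of_mem hmem]
      have hub : 0 ≤ b - a * x := by
        have : a * x ≤ b := (le_div_iff₀' ha).mp hmem.2
        linarith
      exact mul_nonneg ha.le (Real.rpow_nonneg hub _)
    · rw [Set.indicator_of_notMem hmem]
  · -- integral = 1
    unfold pdens
    rw [← hrdef, ← hbdef]
    rw [MeasureTheory.integral_indicator measurableSet_Icc,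
      MeasureTheory.integral_Icc_eq_integral_Ioc,
      ← intervalIntegral.integral_of_le (by positivity : (0:ℝ) ≤ b / a)]
    calc ∫ x in (0:ℝ)..(b/a), a * (b - a * x) ^ (-r)
        = a * ∫ x in (0:ℝ)..(b/a), (fun u => (b - u) ^ (-r)) (a * x) := by
          rw [← intervalIntegral.integral_const_mul]
      _ = a * (a⁻¹ • ∫ u in (a*0)..(a*(b/a)), (b - u) ^ (-r)) := by
          rw [intervalIntegral.integral_comp_mul_left (fun u => (b - u) ^ (-r)) (ne_of_gt ha)]
      _ = ∫ u in (0:ℝ)..b, (b - u) ^ (-r) := by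
          rw [mul_zero, mul_div_cancel₀ _ (ne_of_gt ha), smul_eq_mul,
            ← mul_assoc, mul_inv_cancel₀ (ne_of_gt ha), one_mul]
      _ = ∫ v in (b-b)..(b-0), v ^ (-r) := by
          rw [intervalIntegral.integral_comp_sub_left (fun v => v ^ (-r)) b]
      _ = ∫ v in (0:ℝ)..b, v ^ (-r) := by rw [sub_self, sub_zero]
      _ = (b ^ (-r + 1) - (0:ℝ) ^ (-r + 1)) / (-r + 1) := by
          exact integral_rpow (Or.inl (by linarith))
      _ = 1 := by
          rw [Real.zero_rpow (by linarith : -r + 1 ≠ 0)]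
          have hb1 : b ^ (-r + 1) = 1 - r := by
            rw [show (-r + 1 : ℝ) = 1 - r by ring, hbdef]
            unfold bOf
            rw [one_div]
            exact Real.rpow_inv_rpow (by linarith) (by linarith)
          rw [hb1, sub_zero, show (-r + 1 : ℝ) = 1 - r by ring,
            div_self (by linarith : (1 - r : ℝ) ≠ 0)]
  · -- s-concavity
    intro x y θ hθ0 hθ1 hpx hpy
    constructor
    · intro h0; exact absurd h0 hs0
    intro _
    have hxmem : x ∈ Set.Icc 0 (b / a) := by
      by_contra h
      rw [show pdens s a x = 0 from Set.indicator_of_notMem h _] at hpx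
      exact lt_irrefl 0 hpx
    have hymem : y ∈ Set.Icc 0 (b / a) := by
      by_contra h
      rw [show pdens s a y = 0 from Set.indicator_of_notMem h _] at hpy
      exact lt_irrefl 0 hpy
    have hux : 0 < b - a * x := by
      rcases lt_or_eq_of_le ((le_div_iff₀' ha).mp hxmem.2) with h | h
      · linarith
      · exfalso
        have : pdens s a x = 0 := by
          unfold pdens
          rw [← hrdef, ← hbdef, Set.indicator_of_mem hxmem,
            show b - a * x = 0 by linarith,
            Real.zero_rpow (by linarith : -r ≠ 0), mul_zero]
        rw [this] at hpx; exact lt_irrefl 0 hpx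
    have huy : 0 < b - a * y := by
      rcases lt_or_eq_of_le ((le_div_iff₀' ha).mp hymem.2) with h | h
      · linarith
      · exfalso
        have : pdens s a y = 0 := by
          unfold pdens
          rw [← hrdef, ← hbdef, Set.indicator_of_mem hymem,
            show b - a * y = 0 by linarith,
            Real.zero_rpow (by linarith : -r ≠ 0), mul_zero]
        rw [this] at hpy; exact lt_irrefl 0 hpy
    set z := (1 - θ) * x + θ * y with hzdef
    have huz : 0 < b - a * z := by
      have hsum : b - a * z = (1 - θ) * (b - a * x) + θ * (b - a * y) := by
        rw [hzdef]; ring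
      rw [hsum]
      rcases eq_or_lt_of_le hθ1 with h | h
      · rw [h]; norm_num; linarith
      · have h1 : 0 < (1 - θ) * (b - a * x) := mul_pos (by linarith) hux
        have h2 : 0 ≤ θ * (b - a * y) := mul_nonneg hθ0 huy.le
        linarith
    have hz0 : 0 ≤ z := by
      have h1 : 0 ≤ (1 - θ) * x := mul_nonneg (by linarith) hxmem.1
      have h2 : 0 ≤ θ * y := mul_nonneg hθ0 hymem.1
      rw [hzdef]; linarith
    have hzval := pdens_eq hs ha hz0 (by
      have h := huz; rw [hbdef, hrdef] at h; linarith)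
    rw [← hrdef, ← hbdef] at hzval
    have hpow : ∀ w : ℝ, w ∈ Set.Icc 0 (b / a) → 0 < b - a * w →
        (pdens s a w) ^ s = a ^ s * (b - a * w) := by
      intro w hwmem hw
      have hval : pdens s a w = a * (b - a * w) ^ (-r) := by
        unfold pdens
        rw [← hrdef, ← hbdef, Set.indicator_of_mem hwmem]
      have hrs : -r * s = 1 := by
        rw [hrdef]; unfold rOf; field_simp
      rw [hval, Real.mul_rpow ha.le (Real.rpow_nonneg hw.le _),
        ← Real.rpow_mul hw.le, hrs, Real.rpow_one]
    rw [hpow x hxmem hux, hpow y hymem huy, hzval]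
    have hcomb : (1 - θ) * (a ^ s * (b - a * x)) + θ * (a ^ s * (b - a * y))
        = a ^ s * (b - a * z) := by rw [hzdef]; ring
    rw [hcomb, one_div, Real.mul_rpow (Real.rpow_nonneg ha.le s) huz.le,
      Real.rpow_rpow_inv ha.le hs0]
    have hexp : -r = s⁻¹ := by
      rw [hrdef]; unfold rOf; field_simp
    rw [hexp]

/-- For `s < -1`, with data `0 < X₁, …, Xₙ`, the log-likelihood
`ℓ_n(a) = ∑ᵢ (log a − r log(b_r − a Xᵢ))` tends to `+∞` as `a ↑ b_r / maxᵢ Xᵢ`;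
consequently no maximum likelihood estimator over the class of `s`-concave densities
exists. -/
theorem loglik_tendsto_atTop_and_no_MLE (s : ℝ) (hs : s < -1) (n : ℕ) (hn : 0 < n)
    (X : Fin n → ℝ) (hX : ∀ i, 0 < X i) (Xmax : ℝ) (hXle : ∀ i, X i ≤ Xmax)
    (hXmem : ∃ i, X i = Xmax) :
    Tendsto
      (fun a : ℝ => ∑ i, (Real.log a - rOf s * Real.log (bOf (rOf s) - a * X i)))
      (nhdsWithin (bOf (rOf s) / Xmax) (Set.Iio (bOf (rOf s) / Xmax))) atTop ∧
    ¬ ∃ phat ∈ Ps s, ∀ q ∈ Ps s,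
        ∑ i, Real.log (q (X i)) ≤ ∑ i, Real.log (phat (X i)) := by
  have hr0 := rOf_pos hs
  have hr1 := rOf_lt_one hs
  have hb := bOf_pos hs
  obtain ⟨i0, hi0⟩ := hXmem
  have hXmax : 0 < Xmax := hi0 ▸ hX i0
  set r := rOf s with hrdef
  set b := bOf r with hbdef
  set L := b / Xmax with hLdef
  have hL : 0 < L := div_pos hb hXmax
  have hLX : L * Xmax = b := div_mul_cancel₀ _ (ne_of_gt hXmax)
  -- positive remainders on Iio L
  have hposrem : ∀ i, ∀ a : ℝ, 0 < a → a < L → 0 < b - a * X i := by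
    intro i a ha0 haL
    have h1 : a * X i ≤ a * Xmax := mul_le_mul_of_nonneg_left (hXle i) ha0.le
    have h2 : a * Xmax < L * Xmax := mul_lt_mul_of_pos_right haL hXmax
    rw [hLX] at h2
    linarith
  -- main divergent term
  have hT1 : Tendsto (fun a : ℝ => Real.log a) (nhdsWithin L (Set.Iio L))
      (nhds (Real.log L)) :=
    ((Real.continuousAt_log (ne_of_gt hL)).tendsto).mono_left nhdsWithin_le_nhds
  have hT2 : Tendsto (fun a : ℝ => b - a * Xmax) (nhdsWithin L (Set.Iio L))
      (nhdsWithin 0 (Set.Ioi 0)) := by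
    apply tendsto_nhdsWithin_of_tendsto_nhds_of_eventually_within
    · have : Tendsto (fun a : ℝ => b - a * Xmax) (nhds L) (nhds (b - L * Xmax)) := by
        apply Tendsto.const_sub
        exact (continuous_id.mul continuous_const).tendsto L
      rw [hLX, sub_self] at this
      exact this.mono_left nhdsWithin_le_nhds
    · filter_upwards [eventually_mem_nhdsWithin,
        Ioo_mem_nhdsLT_of_mem (show L ∈ Set.Ioc (L/2) L from ⟨half_lt_self hL, le_refl L⟩)]
        with a ha haI
      have h := hposrem i0 a (lt_trans (half_pos hL) haI.1) ha
      rwa [hi0] at h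
  have hT3 : Tendsto (fun a : ℝ => Real.log (b - a * Xmax))
      (nhdsWithin L (Set.Iio L)) atBot :=
    Real.tendsto_log_nhdsGT_zero.comp hT2
  have hT4 : Tendsto (fun a : ℝ => -r * Real.log (b - a * Xmax))
      (nhdsWithin L (Set.Iio L)) atTop := by
    have h := (tendsto_neg_atBot_atTop.comp hT3).const_mul_atTop hr0
    refine h.congr (fun a => ?_)
    simp only [Function.comp]; ring
  have hf0 : Tendsto (fun a : ℝ => Real.log a - r * Real.log (b - a * Xmax))
      (nhdsWithin L (Set.Iio L)) atTop := by
    have h := hT1.add_atTop hT4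
    refine h.congr (fun a => ?_); ring
  -- part 1
  have part1 : Tendsto
      (fun a : ℝ => ∑ i, (Real.log a - r * Real.log (b - a * X i)))
      (nhdsWithin L (Set.Iio L)) atTop := by
    set C := Real.log (L/2) - r * Real.log b with hCdef
    apply Filter.tendsto_atTop_mono'
      (f₁ := fun a => (Real.log a - r * Real.log (b - a * Xmax))
        + (Finset.univ.erase i0).card * C)
    · filter_upwards [Ioo_mem_nhdsLT_of_mem
        (show L ∈ Set.Ioc (L/2) L from ⟨half_lt_self hL, le_refl L⟩)] with a ha
      have ha0 : 0 < a := lt_trans (half_pos hL) ha.1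
      have haL : a < L := ha.2
      have hbound : ∀ i, C ≤ Real.log a - r * Real.log (b - a * X i) := by
        intro i
        have h1 : Real.log (L/2) ≤ Real.log a := Real.log_le_log (half_pos hL) ha.1.le
        have h2 : 0 < b - a * X i := hposrem i a ha0 haL
        have h3 : b - a * X i ≤ b := by
          have : 0 < a * X i := mul_pos ha0 (hX i)
          linarith
        have h4 : Real.log (b - a * X i) ≤ Real.log b := Real.log_le_log h2 h3
        have h5 : r * Real.log (b - a * X i) ≤ r * Real.log b :=
          mul_le_mul_of_nonneg_left h4 hr0.le
        rw [hCdef]; linarith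
      calc (Real.log a - r * Real.log (b - a * Xmax)) + (Finset.univ.erase i0).card * C
          ≤ (Real.log a - r * Real.log (b - a * X i0))
            + ∑ i ∈ Finset.univ.erase i0, (Real.log a - r * Real.log (b - a * X i)) := by
            have h6 : ((Finset.univ.erase i0).card : ℝ) * C
                ≤ ∑ i ∈ Finset.univ.erase i0, (Real.log a - r * Real.log (b - a * X i)) := by
              calc ((Finset.univ.erase i0).card : ℝ) * C
                  = ∑ _i ∈ Finset.univ.erase i0, C := by
                    rw [Finset.sum_const, nsmul_eq_mul]
                _ ≤ _ := Finset.sum_le_sum (fun i _ => hbound i)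
            rw [hi0]
            linarith [h6]
        _ = ∑ i, (Real.log a - r * Real.log (b - a * X i)) :=
            Finset.add_sum_erase _ (fun i => Real.log a - r * Real.log (b - a * X i))
              (Finset.mem_univ i0)
    · exact Filter.tendsto_atTop_add_const_right _ _ hf0
  refine ⟨part1, ?_⟩
  -- part 2
  rintro ⟨phat, hpm, hopt⟩
  set M := ∑ i, Real.log (phat (X i)) with hMdef
  have hev1 := part1.eventually_gt_atTop M
  have hev2 := Ioo_mem_nhdsLT_of_mem
    (show L ∈ Set.Ioc (L/2) L from ⟨half_lt_self hL, le_refl L⟩)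
  obtain ⟨a, hgt, haI⟩ := (hev1.and (eventually_of_mem hev2 (fun a ha => ha))).exists
  have ha0 : 0 < a := lt_trans (half_pos hL) haI.1
  have haL : a < L := haI.2
  have hpmem := pdens_mem hs ha0
  have hle := hopt (pdens s a) hpmem
  have hsum : ∑ i, Real.log (pdens s a (X i))
      = ∑ i, (Real.log a - r * Real.log (b - a * X i)) := by
    apply Finset.sum_congr rfl
    intro i _
    have h := pdens_log hs ha0 (hX i).le
      (by rw [← hrdef]; have := hposrem i a ha0 haL; rw [← hbdef]; linarith)
    rw [h, ← hrdef, ← hbdef]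
  rw [hsum] at hle
  exact absurd hle (not_le.mpr hgt)
end

section
/- Let h be a nondecreasing function on ℝ and φ a concave function. For x₁ < x₂, ∫_{x₁}^{x₂} h(φ(x)) dx ≥ (x₂ − x₁) ∫₀¹ h((1−u)φ(x₁) + u φ(x₂)) du. -/
open MeasureTheory
open scoped ENNReal

/-- For `h` nondecreasing and nonnegative and `φ` concave on `[x₁,x₂]`,
`∫_{x₁}^{x₂} h(φ(x)) dx ≥ (x₂ − x₁) ∫₀¹ h((1−u)φ(x₁) + u φ(x₂)) du`. -/
theorem integral_comp_concave_ge (h : ℝ → ℝ) (φ : ℝ → ℝ) (x₁ x₂ : ℝ) (hx : x₁ < x₂)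
    (hmono : Monotone h) (hnonneg : ∀ y, 0 ≤ h y)
    (hconc : ConcaveOn ℝ (Set.Icc x₁ x₂) φ) :
    ENNReal.ofReal (x₂ - x₁) *
        ∫⁻ u in Set.Icc (0 : ℝ) 1, ENNReal.ofReal (h ((1 - u) * φ x₁ + u * φ x₂)) ≤
      ∫⁻ x in Set.Icc x₁ x₂, ENNReal.ofReal (h (φ x)) := by
  set c : ℝ := x₂ - x₁ with hcdef
  have hc : 0 < c := sub_pos.mpr hx
  set g : ℝ → ℝ≥0∞ := fun u => ENNReal.ofReal (h ((1 - u) * φ x₁ + u * φ x₂)) with hgdef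
  have hg : Measurable g := by
    apply ENNReal.measurable_ofReal.comp
    exact hmono.measurable.comp (by fun_prop)
  set T : ℝ → ℝ := fun x => (x - x₁) / c with hTdef
  have hT : Measurable T := by fun_prop
  have hmap : Measure.map T volume = ENNReal.ofReal c • volume := by
    have hTeq : T = (fun y => y + (-(x₁ / c))) ∘ (fun x => c⁻¹ * x) := by
      funext x; simp only [hTdef, Function.comp]; ring
    rw [hTeq, ← Measure.map_map (by fun_prop) (by fun_prop),
      Real.map_volume_mul_left (inv_ne_zero hc.ne'), Measure.map_smul,
      map_add_right_eq_self volume (-(x₁ / c)), inv_inv, abs_of_pos hc]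
  have hpre : T ⁻¹' Set.Icc (0 : ℝ) 1 = Set.Icc x₁ x₂ := by
    ext x
    rw [Set.mem_preimage, Set.mem_Icc, Set.mem_Icc, div_le_one hc, le_div_iff₀ hc]
    constructor <;> intro hz <;> constructor <;> linarith [hz.1, hz.2]
  calc ENNReal.ofReal c * ∫⁻ u in Set.Icc (0 : ℝ) 1, g u
      = ∫⁻ u in Set.Icc (0 : ℝ) 1, g u ∂(ENNReal.ofReal c • volume) := by
        rw [Measure.restrict_smul, lintegral_smul_measure, smul_eq_mul]
    _ = ∫⁻ u in Set.Icc (0 : ℝ) 1, g u ∂(Measure.map T volume) := by rw [hmap]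
    _ = ∫⁻ x in T ⁻¹' Set.Icc (0 : ℝ) 1, g (T x) := setLIntegral_map measurableSet_Icc hg hT
    _ = ∫⁻ x in Set.Icc x₁ x₂, g (T x) := by rw [hpre]
    _ ≤ ∫⁻ x in Set.Icc x₁ x₂, ENNReal.ofReal (h (φ x)) := by
        apply setLIntegral_mono' measurableSet_Icc
        intro x hx'
        have hu : T x ∈ Set.Icc (0 : ℝ) 1 := by rw [← hpre] at hx'; exact hx'
        have hkey := hconc.2 (Set.left_mem_Icc.mpr hx.le) (Set.right_mem_Icc.mpr hx.le)
          (by linarith [hu.2] : (0:ℝ) ≤ 1 - T x) hu.1 (by ring)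
        simp only [smul_eq_mul] at hkey
        have hmul : T x * c = x - x₁ := div_mul_cancel₀ _ hc.ne'
        have hxeq : (1 - T x) * x₁ + T x * x₂ = x := by
          rw [hcdef] at hmul; linear_combination hmul
        rw [hxeq] at hkey
        exact ENNReal.ofReal_le_ofReal (hmono hkey)
end

section
/- Let h be a concave-function transformation, φ concave, f = h ∘ φ, and F(x) = ∫_{−∞}^x f(y) dy. For x₀ < x₁ < x with −∞ < φ(x) < φ(x₁) < φ(x₀) < ∞, one has f(x) ≤ h( φ(x₀) − h(φ(x₁)) · (φ(x₀) − φ(x₁)) · (x − x₀) / (F(x) − F(x₀)) ). -/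
open MeasureTheory
open scoped ENNReal

/-- Concavity for extended-real-valued functions on ℝ. -/
def ConcaveE (φ : ℝ → EReal) : Prop :=
  ∀ x y θ : ℝ, 0 ≤ θ → θ ≤ 1 →
    ((1 - θ : ℝ) : EReal) * φ x + (θ : EReal) * φ y ≤ φ ((1 - θ) * x + θ * y)

/-- A concave-function transformation: a continuously differentiable increasing function
from `[−∞,∞]` to `[0,∞]` with `h(−∞) = 0` and `h(∞) = ∞`. -/
structure ConcaveTransform where
  toFun : EReal → ℝ≥0∞
  mono : Monotone toFun
  cont : Continuous toFun
  map_bot : toFun ⊥ = 0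
  map_top : toFun ⊤ = ⊤
  deriv' : ℝ → ℝ
  hasDeriv : ∀ y : ℝ, toFun (y : EReal) ≠ ⊤ →
    HasDerivAt (fun t : ℝ => (toFun (t : EReal)).toReal) (deriv' y) y
  derivCont : ContinuousOn deriv' {y : ℝ | toFun (y : EReal) ≠ ⊤}

/-- For `f = h ∘ φ` with `φ` concave and `F` the cumulative integral of `f`, for
`x₀ < x₁ < x` with `−∞ < φ(x) < φ(x₁) < φ(x₀) < ∞`,
`f(x) ≤ h(φ(x₀) − h(φ(x₁)) (φ(x₀) − φ(x₁)) (x − x₀) / (F(x) − F(x₀)))`. -/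
theorem concaveTransformed_upper_bound (h : ConcaveTransform) (φ : ℝ → EReal)
    (hφ : ConcaveE φ) (x₀ x₁ x : ℝ) (hx01 : x₀ < x₁) (hx1x : x₁ < x)
    (hbot : ⊥ < φ x) (hφ1 : φ x < φ x₁) (hφ0 : φ x₁ < φ x₀) (htop : φ x₀ < ⊤)
    (hfin : h.toFun (φ x₀) ≠ ⊤)
    (F : ℝ → ℝ≥0∞) (hF : ∀ t, F t = ∫⁻ y in Set.Iic t, h.toFun (φ y))
    (hFfin : F x ≠ ⊤) (hFlt : F x₀ < F x) :
    h.toFun (φ x) ≤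
      h.toFun (((φ x₀).toReal - (h.toFun (φ x₁)).toReal *
          ((φ x₀).toReal - (φ x₁).toReal) * (x - x₀) /
          ((F x).toReal - (F x₀).toReal) : ℝ) : EReal) := by

  -- finiteness of φ values
  have hφx_top : φ x ≠ ⊤ := (hφ1.trans (hφ0.trans htop)).ne
  set a := (φ x₀).toReal with hadef
  set b := (φ x₁).toReal with hbdef
  set p := (φ x).toReal with hpdef
  have ha : φ x₀ = (a : EReal) :=
    (EReal.coe_toReal htop.ne (hbot.trans (hφ1.trans hφ0)).ne').symm
  have hb : φ x₁ = (b : EReal) :=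
    (EReal.coe_toReal (hφ0.trans htop).ne (hbot.trans hφ1).ne').symm
  have hp : φ x = (p : EReal) := (EReal.coe_toReal hφx_top hbot.ne').symm
  have hba : b < a := by
    rw [ha, hb] at hφ0; exact_mod_cast hφ0
  have hpb : p < b := by
    rw [hb, hp] at hφ1; exact_mod_cast hφ1
  -- φ y ≥ φ x₁ on (x₀, x₁]
  have key : ∀ y ∈ Set.Ioc x₀ x₁, φ x₁ ≤ φ y := by
    rintro y ⟨hy1, hy2⟩
    have hd : (0:ℝ) < x₁ - x₀ := by linarith
    set θ := (y - x₀) / (x₁ - x₀) with hθdef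
    have hθ0 : 0 ≤ θ := div_nonneg (by linarith) hd.le
    have hθ1 : θ ≤ 1 := by rw [div_le_one hd]; linarith
    have hyeq : (1 - θ) * x₀ + θ * x₁ = y := by
      have h' : θ * (x₁ - x₀) = y - x₀ := by rw [hθdef]; exact div_mul_cancel₀ _ hd.ne'
      linear_combination h'
    have hcon := hφ x₀ x₁ θ hθ0 hθ1
    rw [hyeq] at hcon
    refine le_trans ?_ hcon
    rw [ha, hb]
    have hcoe : ((1 - θ : ℝ) : EReal) * (a : EReal) + (θ : EReal) * (b : EReal)
        = (((1 - θ) * a + θ * b : ℝ) : EReal) := by norm_cast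
    rw [hcoe]
    exact_mod_cast (by nlinarith [hba.le] : b ≤ (1 - θ) * a + θ * b)
  -- split the integral
  have hIic : Set.Iic x = Set.Iic x₀ ∪ Set.Ioc x₀ x :=
    (Set.Iic_union_Ioc_eq_Iic (hx01.trans hx1x).le).symm
  have hsplit : F x = F x₀ + ∫⁻ y in Set.Ioc x₀ x, h.toFun (φ y) := by
    rw [hF x, hF x₀, hIic, lintegral_union measurableSet_Ioc (Set.Iic_disjoint_Ioc le_rfl)]
  have hIfin : (∫⁻ y in Set.Ioc x₀ x, h.toFun (φ y)) ≠ ⊤ :=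
    fun hT => hFfin (by rw [hsplit, hT, add_top])
  have hF0fin : F x₀ ≠ ⊤ := ne_top_of_le_ne_top hFfin (hsplit ▸ le_self_add)
  have hH'fin : h.toFun (φ x₁) ≠ ⊤ := ne_top_of_le_ne_top hfin (h.mono hφ0.le)
  -- lower bound on the integral
  have hlow : h.toFun (φ x₁) * ENNReal.ofReal (x₁ - x₀)
      ≤ ∫⁻ y in Set.Ioc x₀ x, h.toFun (φ y) := by
    calc h.toFun (φ x₁) * ENNReal.ofReal (x₁ - x₀)
        = ∫⁻ _ in Set.Ioc x₀ x₁, h.toFun (φ x₁) := by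
          rw [setLIntegral_const, Real.volume_Ioc]
      _ ≤ ∫⁻ y in Set.Ioc x₀ x₁, h.toFun (φ y) :=
          setLIntegral_mono' measurableSet_Ioc fun y hy => h.mono (key y hy)
      _ ≤ _ := lintegral_mono_set (Set.Ioc_subset_Ioc_right hx1x.le)
  set H := (h.toFun (φ x₁)).toReal with hHdef
  have hH0 : 0 ≤ H := ENNReal.toReal_nonneg
  have hD : (F x).toReal - (F x₀).toReal
      = (∫⁻ y in Set.Ioc x₀ x, h.toFun (φ y)).toReal := by
    rw [hsplit, ENNReal.toReal_add hF0fin hIfin]; ring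
  have hDpos : 0 < (F x).toReal - (F x₀).toReal := by
    have := (ENNReal.toReal_lt_toReal hF0fin hFfin).mpr hFlt
    linarith
  have hHD : H * (x₁ - x₀) ≤ (F x).toReal - (F x₀).toReal := by
    rw [hD]
    have hm := ENNReal.toReal_mono hIfin hlow
    rwa [ENNReal.toReal_mul, ENNReal.toReal_ofReal (by linarith : (0:ℝ) ≤ x₁ - x₀)] at hm
  -- slope inequality from concavity
  have hslope : (a - b) * (x - x₀) ≤ (x₁ - x₀) * (a - p) := by
    have hd : (0:ℝ) < x - x₀ := by linarith
    set θ := (x₁ - x₀) / (x - x₀) with hθdef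
    have hθ0 : 0 ≤ θ := div_nonneg (by linarith) hd.le
    have hθ1 : θ ≤ 1 := by rw [div_le_one hd]; linarith
    have hyeq : (1 - θ) * x₀ + θ * x = x₁ := by
      have h' : θ * (x - x₀) = x₁ - x₀ := by rw [hθdef]; exact div_mul_cancel₀ _ hd.ne'
      linear_combination h'
    have hcon := hφ x₀ x θ hθ0 hθ1
    rw [hyeq, hb, ha, hp] at hcon
    have hcoe : ((1 - θ : ℝ) : EReal) * (a : EReal) + (θ : EReal) * (p : EReal)
        = (((1 - θ) * a + θ * p : ℝ) : EReal) := by norm_cast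
    rw [hcoe] at hcon
    have hr : (1 - θ) * a + θ * p ≤ b := by exact_mod_cast hcon
    have hθx : θ * (x - x₀) = x₁ - x₀ := by
      rw [hθdef]; exact div_mul_cancel₀ _ hd.ne'
    nlinarith [hr, hθx]
  -- conclude
  have hc : H * (a - b) * (x - x₀) / ((F x).toReal - (F x₀).toReal) ≤ a - p := by
    rw [div_le_iff₀ hDpos]
    nlinarith [hslope, hHD, hH0, hpb, hba, mul_le_mul_of_nonneg_left hslope hH0,
      mul_le_mul_of_nonneg_right hHD (by linarith : (0:ℝ) ≤ a - p)]
  refine h.mono ?_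
  rw [hp]
  exact_mod_cast (by linarith : p ≤ a - H * (a - b) * (x - x₀) / ((F x).toReal - (F x₀).toReal))
end

section
/- Fix M > 0 and −1 < s < 0. There exist constants L, depending only on s and M, such that every density p ∈ P_{M,s} satisfies p(x) ≤ (M^s + (L/(2M))|x|)^{1/s} for |x| ≥ 2M+1, and p(x) ≤ M for |x| < 2M+1. -/
open MeasureTheory

/-- The class `P_{M,s}`: `s`-concave probability densities bounded above by `M`
and bounded below by `1/M` on `[-1,1]`. -/
def PMs (M s : ℝ) : Set (ℝ → ℝ) :=
  {p | (∀ x, 0 ≤ p x) ∧ (∫ x, p x = 1) ∧ IsSConc s p ∧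
       (∀ x, p x ≤ M) ∧ (∀ x : ℝ, |x| ≤ 1 → 1 / M ≤ p x)}

lemma PMs_D_pos {M s : ℝ} (hM : 0 < M) (hs0 : s < 0) :
    (0:ℝ) < (1 / (2 * M)) ^ s - (1 / M) ^ s := by
  have hlt : 1 / (2 * M) < 1 / M := one_div_lt_one_div_of_lt hM (by linarith)
  have := Real.rpow_lt_rpow_of_neg (by positivity : (0:ℝ) < 1 / (2 * M)) hlt hs0
  linarith

lemma PMs_neg {M s : ℝ} {p : ℝ → ℝ} (hs0 : s < 0) (hp : p ∈ PMs M s) :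
    (fun t => p (-t)) ∈ PMs M s := by
  obtain ⟨h0, h1, h2, h3, h4⟩ := hp
  refine ⟨fun x => h0 _, ?_, ?_, fun x => h3 _, fun x hx => h4 _ (by rwa [abs_neg])⟩
  · rw [integral_neg_eq_self]; exact h1
  · intro x y θ hθ0 hθ1 hx hy
    refine ⟨fun h => absurd h (ne_of_lt hs0), fun hs => ?_⟩
    have := (h2 (-x) (-y) θ hθ0 hθ1 hx hy).2 hs
    rwa [show (1 - θ) * (-x) + θ * (-y) = -((1 - θ) * x + θ * y) by ring] at this

lemma PMs_key {M s : ℝ} (hM : 0 < M) (hs0 : s < 0) {p : ℝ → ℝ} (hp : p ∈ PMs M s)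
    {x : ℝ} (hx : 2 * M + 1 ≤ x) :
    p x ≤ (M ^ s + ((1 / (2 * M)) ^ s - (1 / M) ^ s) / (2 * M + 1) * x) ^ (1 / s) := by
  obtain ⟨h0, h1, h2, h3, h4⟩ := hp
  have hD : (0:ℝ) < (1 / (2 * M)) ^ s - (1 / M) ^ s := PMs_D_pos hM hs0
  have h21 : (0:ℝ) < 2 * M + 1 := by linarith
  have hcpos : 0 < ((1 / (2 * M)) ^ s - (1 / M) ^ s) / (2 * M + 1) := div_pos hD h21
  have hx_pos : 0 < x := by linarith
  have hInt : Integrable p := by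
    by_contra h
    rw [integral_undef h] at h1
    exact one_ne_zero h1.symm
  have hstep : ∃ x₁ : ℝ, 1 ≤ x₁ ∧ x₁ ≤ 2 * M + 1 ∧ p x₁ ≤ 1 / (2 * M) := by
    by_contra h
    push_neg at h
    have hii : ∀ a b : ℝ, IntervalIntegrable p volume a b := fun a b =>
      hInt.intervalIntegrable
    have hA : (2 : ℝ) / M ≤ ∫ t in (-1:ℝ)..1, p t := by
      have : ∫ t in (-1:ℝ)..1, (1 / M : ℝ) ≤ ∫ t in (-1:ℝ)..1, p t := by
        apply intervalIntegral.integral_mono_on (by norm_num) (by simp) (hii _ _)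
        intro t ht
        exact h4 t (abs_le.2 ⟨ht.1, ht.2⟩)
      rw [intervalIntegral.integral_const] at this
      simp only [smul_eq_mul] at this
      calc (2:ℝ)/M = (1 - (-1)) * (1 / M) := by ring
        _ ≤ _ := this
    have hB : (1 : ℝ) ≤ ∫ t in (1:ℝ)..(2*M+1), p t := by
      have : ∫ t in (1:ℝ)..(2*M+1), (1 / (2*M) : ℝ) ≤ ∫ t in (1:ℝ)..(2*M+1), p t := by
        apply intervalIntegral.integral_mono_on (by linarith) (by simp) (hii _ _)
        intro t ht
        exact (h t ht.1 ht.2).le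
      rw [intervalIntegral.integral_const] at this
      simp only [smul_eq_mul] at this
      calc (1:ℝ) = (2*M+1 - 1) * (1 / (2*M)) := by field_simp; ring
        _ ≤ _ := this
    have hsum : ∫ t in (-1:ℝ)..(2*M+1), p t =
        (∫ t in (-1:ℝ)..1, p t) + ∫ t in (1:ℝ)..(2*M+1), p t :=
      (intervalIntegral.integral_add_adjacent_intervals (hii _ _) (hii _ _)).symm
    have htot : ∫ t in (-1:ℝ)..(2*M+1), p t ≤ 1 := by
      rw [intervalIntegral.integral_of_le (by linarith), ← h1]
      exact setIntegral_le_integral hInt (Filter.Eventually.of_forall h0)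
    rw [hsum] at htot
    have : (0:ℝ) < 2 / M := by positivity
    linarith
  obtain ⟨x₁, hx1a, hx1b, hx1p⟩ := hstep
  have hbase : 0 < M ^ s + ((1 / (2 * M)) ^ s - (1 / M) ^ s) / (2 * M + 1) * x :=
    add_pos (Real.rpow_pos_of_pos hM s) (mul_pos hcpos hx_pos)
  rcases eq_or_lt_of_le (h0 x) with hpx | hpx
  · rw [← hpx]
    exact Real.rpow_nonneg hbase.le _
  have hp0 : 0 < p 0 := lt_of_lt_of_le (by positivity) (h4 0 (by norm_num))
  set θ : ℝ := x₁ / x with hθ_def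
  have hθ0 : 0 < θ := div_pos (by linarith) hx_pos
  have hθ1 : θ ≤ 1 := (div_le_one hx_pos).2 (by linarith)
  have hθx : θ * x = x₁ := div_mul_cancel₀ _ (ne_of_gt hx_pos)
  have hconc := (h2 0 x θ hθ0.le hθ1 hp0 hpx).2 (ne_of_lt hs0)
  rw [show (1 - θ) * 0 + θ * x = x₁ by rw [hθx]; ring] at hconc
  have hBpos : 0 < (1 - θ) * p 0 ^ s + θ * p x ^ s :=
    add_pos_of_nonneg_of_pos (mul_nonneg (by linarith) (Real.rpow_nonneg hp0.le s))
      (mul_pos hθ0 (Real.rpow_pos_of_pos hpx s))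
  have hB1 : (1 / (2 * M)) ^ s ≤ (1 - θ) * p 0 ^ s + θ * p x ^ s := by
    have h5 : ((1 - θ) * p 0 ^ s + θ * p x ^ s) ^ (1 / s) ≤ 1 / (2 * M) :=
      le_trans hconc hx1p
    have h6 := Real.rpow_le_rpow_of_nonpos (Real.rpow_pos_of_pos hBpos _) h5 hs0.le
    rwa [← Real.rpow_mul hBpos.le, one_div_mul_cancel (ne_of_lt hs0), Real.rpow_one] at h6
  have hp0s : p 0 ^ s ≤ (1 / M) ^ s :=
    Real.rpow_le_rpow_of_nonpos (by positivity) (h4 0 (by norm_num)) hs0.le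
  have hK : (1 / (2 * M)) ^ s ≤ (1 - θ) * (1 / M) ^ s + θ * p x ^ s := by
    have := mul_le_mul_of_nonneg_left hp0s (by linarith : (0:ℝ) ≤ 1 - θ)
    linarith
  have h5 : x * ((1 / (2 * M)) ^ s - (1 / M) ^ s) ≤ x₁ * (p x ^ s - (1 / M) ^ s) := by
    have h := mul_le_mul_of_nonneg_left hK hx_pos.le
    have e : x * ((1 - θ) * (1 / M) ^ s + θ * p x ^ s)
        = x * (1 / M) ^ s - (θ * x) * (1 / M) ^ s + (θ * x) * p x ^ s := by ring
    rw [e, hθx] at h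
    linarith
  have hΔ : 0 < p x ^ s - (1 / M) ^ s := by
    by_contra hcon
    push_neg at hcon
    have h6 : x₁ * (p x ^ s - (1 / M) ^ s) ≤ 0 :=
      mul_nonpos_of_nonneg_of_nonpos (by linarith) hcon
    linarith [mul_pos hx_pos hD]
  have h7 : x₁ * (p x ^ s - (1 / M) ^ s) ≤ (2 * M + 1) * (p x ^ s - (1 / M) ^ s) :=
    mul_le_mul_of_nonneg_right hx1b hΔ.le
  have h9 : ((1 / (2 * M)) ^ s - (1 / M) ^ s) / (2 * M + 1) * x
      ≤ p x ^ s - (1 / M) ^ s := by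
    rw [div_mul_eq_mul_div, div_le_iff₀ h21]
    nlinarith [h5, h7]
  have hM1 : (1:ℝ) ≤ M := by
    have h := (div_le_iff₀ hM).1 (le_trans (h4 0 (by norm_num)) (h3 0))
    nlinarith
  have hMs : M ^ s ≤ (1 / M) ^ s := by
    apply Real.rpow_le_rpow_of_nonpos (by positivity) _ hs0.le
    rw [div_le_iff₀ hM]
    nlinarith
  have h10 : M ^ s + ((1 / (2 * M)) ^ s - (1 / M) ^ s) / (2 * M + 1) * x ≤ p x ^ s := by
    linarith
  have h11 : (p x ^ s) ^ (1 / s) = p x := by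
    rw [← Real.rpow_mul hpx.le, mul_one_div_cancel (ne_of_lt hs0), Real.rpow_one]
  calc p x = (p x ^ s) ^ (1 / s) := h11.symm
    _ ≤ _ := Real.rpow_le_rpow_of_nonpos hbase h10
        (div_nonpos_of_nonneg_of_nonpos (by norm_num) hs0.le)

/-- Envelope for `P_{M,s}`, `−1 < s < 0`: there is `L > 0` (depending only on `s, M`)
such that every `p ∈ P_{M,s}` satisfies `p(x) ≤ (M^s + (L/(2M))|x|)^{1/s}` for
`|x| ≥ 2M+1` and `p(x) ≤ M` for `|x| < 2M+1`. -/
theorem PMs_envelope (M s : ℝ) (hM : 0 < M) (hs1 : -1 < s) (hs0 : s < 0) :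
    ∃ L > 0, ∀ p ∈ PMs M s, ∀ x : ℝ,
      (2 * M + 1 ≤ |x| → p x ≤ (M ^ s + L / (2 * M) * |x|) ^ (1 / s)) ∧
      (|x| < 2 * M + 1 → p x ≤ M) := by
  have hD : (0:ℝ) < (1 / (2 * M)) ^ s - (1 / M) ^ s := PMs_D_pos hM hs0
  have h21 : (0:ℝ) < 2 * M + 1 := by linarith
  refine ⟨2 * M * (((1 / (2 * M)) ^ s - (1 / M) ^ s) / (2 * M + 1)), by positivity,
    fun p hp x => ?_⟩
  have hLc : 2 * M * (((1 / (2 * M)) ^ s - (1 / M) ^ s) / (2 * M + 1)) / (2 * M)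
      = ((1 / (2 * M)) ^ s - (1 / M) ^ s) / (2 * M + 1) := by
    field_simp
  refine ⟨fun hx => ?_, fun _ => hp.2.2.2.1 x⟩
  rw [hLc]
  rcases le_or_gt 0 x with hx0 | hx0
  · rw [abs_of_nonneg hx0] at hx ⊢
    exact PMs_key hM hs0 hp hx
  · rw [abs_of_neg hx0] at hx ⊢
    have := PMs_key hM hs0 (PMs_neg hs0 hp) hx
    simpa using this
end

section
/- Let h be a concave-function transformation with h(y) = o(|y|^{−α}) as y → −∞ for some α > 1, and fix M > 0. Then there exist constants D, L ∈ (0,∞) depending only on h and M such that every p ∈ P_{M,h} satisfies p(x) ≤ D(1 + (L/(2M))|x|)^{−α} for |x| ≥ 2M+1 and p(x) ≤ M for |x| < 2M+1. -/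
open MeasureTheory
open scoped ENNReal

/-- The class `P_h` of `h`-concave-transformed probability densities on ℝ. -/
def Pdens (h : ConcaveTransform) : Set (ℝ → ℝ≥0∞) :=
  {p | ∃ φ : ℝ → EReal, ConcaveE φ ∧ (∀ x, p x = h.toFun (φ x)) ∧ (∫⁻ x, p x = 1)}

/-- `P_{M,h}`: members of `P_h` bounded above by `M` and below by `1/M` on `[-1,1]`. -/
def PMh (h : ConcaveTransform) (M : ℝ) : Set (ℝ → ℝ≥0∞) :=
  {p | p ∈ Pdens h ∧ (∀ x, p x ≤ ENNReal.ofReal M) ∧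
       (∀ x : ℝ, |x| ≤ 1 → ENNReal.ofReal (1 / M) ≤ p x)}

lemma aux_lin (sv yv uv : ℝ) (hs : 0 < sv) (h2 : 2*(1+sv+yv) ≤ uv * sv) :
    1 + sv/2 * uv ≤ sv*(uv-1) - yv := by nlinarith

lemma concaveE_neg {φ : ℝ → EReal} (hφ : ConcaveE φ) : ConcaveE (fun t => φ (-t)) := by
  intro x y θ h0 h1
  have h := hφ (-x) (-y) θ h0 h1
  have e : (1-θ)*(-x)+θ*(-y) = -((1-θ)*x+θ*y) := by ring
  rw [e] at h
  exact h

lemma concaveE_between {φ : ℝ → EReal} (hφ : ConcaveE φ) {a b c A C : ℝ}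
    (hab : a < b) (hbc : b < c) (ha : φ a = (A : EReal)) (hc : φ c = (C : EReal)) :
    (((1 - (b-a)/(c-a)) * A + (b-a)/(c-a) * C : ℝ) : EReal) ≤ φ b := by
  set θ := (b-a)/(c-a) with hθdef
  have hca : (0:ℝ) < c - a := by linarith
  have hθ0 : 0 ≤ θ := div_nonneg (by linarith) hca.le
  have hθ1 : θ ≤ 1 := by rw [hθdef, div_le_one hca]; linarith
  have hb : (1-θ)*a + θ*c = b := by
    have hθc : θ*(c-a) = b-a := by rw [hθdef]; exact div_mul_cancel₀ _ hca.ne'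
    linear_combination hθc
  have h := hφ a c θ hθ0 hθ1
  rw [ha, hc, hb] at h
  have heq : ((1 - θ : ℝ) : EReal) * (A:EReal) + (θ : EReal) * (C:EReal)
      = (((1-θ)*A + θ*C : ℝ) : EReal) := by norm_cast
  rw [heq] at h
  exact h

lemma concaveE_min {φ : ℝ → EReal} (hφ : ConcaveE φ) {a b c A C : ℝ}
    (hab : a < b) (hbc : b < c) (hA : (A : EReal) ≤ φ a) (hC : (C : EReal) ≤ φ c)
    (haT : φ a ≠ ⊤) (hcT : φ c ≠ ⊤) :
    ((min A C : ℝ) : EReal) ≤ φ b := by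
  have haB : φ a ≠ ⊥ := fun hb => by simp [hb] at hA
  have hcB : φ c ≠ ⊥ := fun hb => by simp [hb] at hC
  have ha : φ a = ((φ a).toReal : EReal) := (EReal.coe_toReal haT haB).symm
  have hc : φ c = ((φ c).toReal : EReal) := (EReal.coe_toReal hcT hcB).symm
  set A' := (φ a).toReal
  set C' := (φ c).toReal
  have hA' : A ≤ A' := by exact_mod_cast ha ▸ hA
  have hC' : C ≤ C' := by exact_mod_cast hc ▸ hC
  have key := concaveE_between hφ hab hbc ha hc
  refine le_trans ?_ key
  norm_cast
  set θ := (b-a)/(c-a) with hθdef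
  have hca : (0:ℝ) < c - a := by linarith
  have hθ0 : 0 ≤ θ := div_nonneg (by linarith) hca.le
  have hθ1 : θ ≤ 1 := by rw [hθdef, div_le_one hca]; linarith
  nlinarith [min_le_left A C, min_le_right A C,
    mul_le_mul_of_nonneg_left hA' (by linarith : (0:ℝ) ≤ 1 - θ),
    mul_le_mul_of_nonneg_left hC' hθ0]

lemma concaveE_extrap {φ : ℝ → EReal} (hφ : ConcaveE φ) {a b c A B : ℝ}
    (hab : a < b) (hbc : b < c) (hA : (A : EReal) ≤ φ a) (haT : φ a ≠ ⊤)
    (hB : φ b ≤ (B : EReal)) (hcT : φ c ≠ ⊤) :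
    φ c ≤ ((A + (B - A) * (c - a) / (b - a) : ℝ) : EReal) := by
  by_cases hcB : φ c = ⊥
  · rw [hcB]; exact bot_le
  have haB : φ a ≠ ⊥ := fun hb => by simp [hb] at hA
  have ha : φ a = ((φ a).toReal : EReal) := (EReal.coe_toReal haT haB).symm
  have hc : φ c = ((φ c).toReal : EReal) := (EReal.coe_toReal hcT hcB).symm
  set A' := (φ a).toReal
  set C := (φ c).toReal
  have hA' : A ≤ A' := by exact_mod_cast ha ▸ hA
  have key := (concaveE_between hφ hab hbc ha hc).trans hB
  rw [hc]
  norm_cast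
  norm_cast at key
  set θ := (b-a)/(c-a) with hθdef
  have hca : (0:ℝ) < c - a := by linarith
  have hba : (0:ℝ) < b - a := by linarith
  have e1 : ((1 - θ) * A' + θ * C) * (c-a) = (c-b)*A' + (b-a)*C := by
    rw [hθdef]; field_simp; ring
  have h2 : (c-b)*A' + (b-a)*C ≤ B*(c-a) := by
    rw [← e1]; exact mul_le_mul_of_nonneg_right key hca.le
  have h3 : A + (B-A)*(c-a)/(b-a) = (A*(b-a) + (B-A)*(c-a))/(b-a) := by
    field_simp
  rw [h3, le_div_iff₀ hba]
  nlinarith [mul_le_mul_of_nonneg_left hA' (by linarith : (0:ℝ) ≤ c - b)]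

set_option maxHeartbeats 2000000 in
/-- Envelope for `P_{M,h}`: if `h(y) = o(|y|^{−α})` as `y → −∞` with `α > 1`, there are
`D, L ∈ (0,∞)` depending only on `h` and `M` such that every `p ∈ P_{M,h}` satisfies
`p(x) ≤ D(1 + (L/(2M))|x|)^{−α}` for `|x| ≥ 2M+1` and `p(x) ≤ M` for `|x| < 2M+1`. -/
theorem PMh_envelope (h : ConcaveTransform) (α M : ℝ) (hα : 1 < α) (hM : 0 < M)
    (hsmall : ∀ ε > 0, ∃ Y : ℝ, ∀ y : ℝ, y ≤ Y →
      h.toFun (y : EReal) ≤ ENNReal.ofReal (ε * |y| ^ (-α))) :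
    ∃ D > 0, ∃ L > 0, ∀ p ∈ PMh h M, ∀ x : ℝ,
      (2 * M + 1 ≤ |x| → p x ≤ ENNReal.ofReal (D * (1 + L / (2 * M) * |x|) ^ (-α))) ∧
      (|x| < 2 * M + 1 → p x ≤ ENNReal.ofReal M) := by
  obtain ⟨Y₀, hY₀⟩ := hsmall (1/(2*M+4)) (by positivity)
  obtain ⟨Y₁, hY₁⟩ := hsmall 1 one_pos
  set g : ℝ → ℝ≥0∞ := fun y => h.toFun (y : EReal) with hg
  have hgcont : Continuous g := h.cont.comp continuous_coe_real_ereal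
  set ym : ℝ := min Y₀ (-1) with hymdef
  have hym : g ym < ENNReal.ofReal (1/(M+2)) := by
    have h1 := hY₀ ym (min_le_left _ _)
    have hym1 : ym ≤ -1 := min_le_right _ _
    have habs : (1:ℝ) ≤ |ym| := by
      rw [abs_of_neg (by linarith : ym < 0)]
      linarith
    have h2 : |ym| ^ (-α) ≤ 1 := Real.rpow_le_one_of_one_le_of_nonpos habs (by linarith)
    calc g ym ≤ ENNReal.ofReal (1/(2*M+4) * |ym| ^ (-α)) := h1
      _ ≤ ENNReal.ofReal (1/(2*M+4)) := by
          apply ENNReal.ofReal_le_ofReal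
          exact mul_le_of_le_one_right (by positivity) h2
      _ < ENNReal.ofReal (1/(M+2)) := by
          rw [ENNReal.ofReal_lt_ofReal_iff (by positivity)]
          rw [div_lt_div_iff₀ (by positivity) (by positivity)]
          nlinarith
  -- a point where g is large
  have htop : Filter.Tendsto g Filter.atTop (nhds ⊤) := by
    have hc : Filter.Tendsto (fun y : ℝ => (y : EReal)) Filter.atTop (nhds ⊤) := by
      have h1 : Filter.Tendsto (fun y : ℝ => (y : EReal)) Filter.atTop (nhdsWithin ⊤ {(⊤:EReal)}ᶜ) := by
        rw [EReal.nhdsWithin_top]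
        exact Filter.tendsto_map
      exact h1.mono_right nhdsWithin_le_nhds
    have := (h.cont.tendsto ⊤).comp hc
    rw [h.map_top] at this
    exact this
  -- pick yp ≥ ym with g yp large
  have h1M : (0:ℝ) < 1/M := by positivity
  obtain ⟨yp, hypm, hyp⟩ : ∃ yp : ℝ, ym ≤ yp ∧ ENNReal.ofReal (1/M) < g yp := by
    have hev : ∀ᶠ y in Filter.atTop, ENNReal.ofReal (1/M) < g y :=
      htop.eventually (eventually_gt_nhds (ENNReal.ofReal_lt_top))
    obtain ⟨yp, h1, h2⟩ := (hev.and (Filter.eventually_ge_atTop ym)).exists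
    exact ⟨yp, h2, h1⟩
  -- IVT: find ystar with g ystar = ofReal c, strictly between
  set c : ℝ := (1/(M+2) + 1/M)/2 with hcdef
  have hc1 : 1/(M+2) < c := by
    rw [hcdef]
    have : 1/(M+2) < 1/M := by
      rw [div_lt_div_iff₀ (by positivity) (by positivity)]; nlinarith
    linarith
  have hc2 : c < 1/M := by
    rw [hcdef]
    have : 1/(M+2) < 1/M := by
      rw [div_lt_div_iff₀ (by positivity) (by positivity)]; nlinarith
    linarith
  have hcmem : ENNReal.ofReal c ∈ Set.Icc (g ym) (g yp) := by
    constructor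
    · exact le_trans hym.le (ENNReal.ofReal_le_ofReal hc1.le)
    · exact le_trans (ENNReal.ofReal_le_ofReal hc2.le) hyp.le
  obtain ⟨ystar, hystar_mem, hystar⟩ :=
    intermediate_value_Icc hypm (hgcont.continuousOn) hcmem
  have hstar1 : ENNReal.ofReal (1/(M+2)) < g ystar := by
    rw [hystar]; exact (ENNReal.ofReal_lt_ofReal_iff (by positivity)).2 hc1
  have hstar2 : g ystar < ENNReal.ofReal (1/M) := by
    rw [hystar]; exact (ENNReal.ofReal_lt_ofReal_iff h1M).2 hc2
  -- find δ > 0 such that both inequalities persist at ystar ± δ/2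
  obtain ⟨δ, hδ, hball⟩ := Metric.isOpen_iff.1
    ((isOpen_Ioo (a := ENNReal.ofReal (1/(M+2))) (b := ENNReal.ofReal (1/M))).preimage hgcont)
    ystar ⟨hstar1, hstar2⟩
  set y₀ : ℝ := ystar + δ/2 with hy₀def
  set y₁ : ℝ := ystar - δ/2 with hy₁def
  have hy₀mem : y₀ ∈ Metric.ball ystar δ := by
    rw [Metric.mem_ball, Real.dist_eq, hy₀def]
    rw [abs_of_pos (by linarith)]
    linarith
  have hy₁mem : y₁ ∈ Metric.ball ystar δ := by
    rw [Metric.mem_ball, Real.dist_eq, hy₁def]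
    rw [abs_of_neg (by linarith)]
    linarith
  have hgy₀ : g y₀ < ENNReal.ofReal (1/M) := (hball hy₀mem).2
  have hgy₁ : ENNReal.ofReal (1/(M+2)) < g y₁ := (hball hy₁mem).1
  have hy01 : y₀ - y₁ = δ := by rw [hy₀def, hy₁def]; ring
  set s : ℝ := δ/M with hsdef
  have hs : 0 < s := by rw [hsdef]; positivity
  set X₀ : ℝ := max (max (M+2) ((y₀ - min Y₁ (-1))/s + 1)) (max (2*(1+s+y₀)/s) (2*M+1))
    with hX₀def
  set L : ℝ := M * s with hLdef
  have hL : 0 < L := by rw [hLdef]; positivity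
  have hL2M : L/(2*M) = s/2 := by rw [hLdef]; field_simp
  set D : ℝ := max 1 (M * (1 + s/2 * X₀)^α) with hDdef
  have hD1 : 1 ≤ D := le_max_left _ _
  refine ⟨D, by linarith, L, hL, ?_⟩
  rintro p ⟨⟨φ, hφ, hpφ, hint⟩, hle, hge⟩ x
  refine ⟨?_, fun _ => hle x⟩
  intro hx
  -- φ never takes the value ⊤
  have hφtop : ∀ t : ℝ, φ t ≠ ⊤ := by
    intro t ht
    have h1 := hle t
    rw [hpφ t, ht, h.map_top] at h1
    exact ENNReal.ofReal_ne_top (top_le_iff.1 h1)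
  -- φ is above y₀ on [-1, 1]
  have hφ1 : ∀ t : ℝ, |t| ≤ 1 → (y₀ : EReal) < φ t := by
    intro t ht
    by_contra hcon
    push_neg at hcon
    have h1 : p t ≤ g y₀ := by rw [hpφ t]; exact h.mono hcon
    exact lt_irrefl _ ((hge t ht).trans_lt (h1.trans_lt hgy₀))
  -- real anchors on [-1,1]
  have hanchor : ∀ t : ℝ, |t| ≤ 1 →
      ∃ A : ℝ, φ t = (A : EReal) ∧ ENNReal.ofReal (1/M) ≤ h.toFun ((A : ℝ) : EReal) := by
    intro t ht
    have hbot : φ t ≠ ⊥ := by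
      intro hb
      have := hφ1 t ht
      rw [hb] at this
      simp at this
    refine ⟨(φ t).toReal, (EReal.coe_toReal (hφtop t) hbot).symm, ?_⟩
    rw [EReal.coe_toReal (hφtop t) hbot]
    rw [← hpφ t]
    exact hge t ht
  -- the integral bound: p (±(M+1)) ≤ 1/(M+2)
  have hKey : ∀ t₀ : ℝ, (t₀ = M+1 ∨ t₀ = -(M+1)) → p t₀ ≤ ENNReal.ofReal (1/(M+2)) := by
    intro t₀ ht₀
    by_cases hbot : φ t₀ = ⊥
    · rw [hpφ t₀, hbot, h.map_bot]; exact zero_le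
    have hc : φ t₀ = (((φ t₀).toReal : ℝ) : EReal) := (EReal.coe_toReal (hφtop t₀) hbot).symm
    set C := (φ t₀).toReal with hCdef
    set Cmin := min (ENNReal.ofReal (1/M)) (p t₀) with hCmin
    -- lower bound p on the interval between t₀ and ∓1
    have hlow : ∀ t : ℝ, ((t₀ = M+1 ∧ t ∈ Set.Ioo (-1 : ℝ) t₀) ∨
        (t₀ = -(M+1) ∧ t ∈ Set.Ioo t₀ (1:ℝ))) → Cmin ≤ p t := by
      intro t htmem
      rcases htmem with ⟨he, hmem⟩ | ⟨he, hmem⟩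
      · obtain ⟨A, hA, hAanchor⟩ := hanchor (-1) (by norm_num)
        have hmin := concaveE_min hφ hmem.1 hmem.2 hA.ge (le_of_eq hc.symm)
          (hφtop _) (hφtop _)
        have hcoemin : ((min A C : ℝ) : EReal) = min ((A:ℝ):EReal) ((C:ℝ):EReal) := by
          rcases le_total A C with hAC | hAC
          · rw [min_eq_left hAC, min_eq_left (EReal.coe_le_coe_iff.2 hAC)]
          · rw [min_eq_right hAC, min_eq_right (EReal.coe_le_coe_iff.2 hAC)]
        have h2 : min (h.toFun ((A:ℝ):EReal)) (h.toFun ((C:ℝ):EReal)) ≤ p t := by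
          rw [hpφ t]
          refine le_trans (le_of_eq ?_) (h.mono hmin)
          rw [hcoemin, Monotone.map_min h.mono]
        refine le_trans ?_ h2
        rw [hCmin]
        exact min_le_min hAanchor (le_of_eq (by rw [hpφ t₀, hc]))
      · obtain ⟨A, hA, hAanchor⟩ := hanchor 1 (by norm_num)
        have hmin := concaveE_min hφ hmem.1 hmem.2 (le_of_eq hc.symm) hA.ge
          (hφtop _) (hφtop _)
        have hcoemin : ((min C A : ℝ) : EReal) = min ((C:ℝ):EReal) ((A:ℝ):EReal) := by
          rcases le_total C A with hAC | hAC
          · rw [min_eq_left hAC, min_eq_left (EReal.coe_le_coe_iff.2 hAC)]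
          · rw [min_eq_right hAC, min_eq_right (EReal.coe_le_coe_iff.2 hAC)]
        have h2 : min (h.toFun ((C:ℝ):EReal)) (h.toFun ((A:ℝ):EReal)) ≤ p t := by
          rw [hpφ t]
          refine le_trans (le_of_eq ?_) (h.mono hmin)
          rw [hcoemin, Monotone.map_min h.mono]
        refine le_trans ?_ h2
        rw [hCmin, min_comm]
        exact min_le_min (le_of_eq (by rw [hpφ t₀, hc])) hAanchor
    -- integral bound
    have hIoo : ∀ u v : ℝ, u < v → (∀ t ∈ Set.Ioo u v, Cmin ≤ p t) →
        Cmin * ENNReal.ofReal (v - u) ≤ 1 := by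
      intro u v huv hlb
      calc Cmin * ENNReal.ofReal (v-u)
          = ∫⁻ t, (Set.Ioo u v).indicator (fun _ => Cmin) t := by
            rw [lintegral_indicator_const measurableSet_Ioo, Real.volume_Ioo]
        _ ≤ ∫⁻ t, p t := by
            apply lintegral_mono
            intro t
            by_cases ht : t ∈ Set.Ioo u v
            · simpa [Set.indicator_of_mem ht] using hlb t ht
            · simp [Set.indicator_of_notMem ht]
        _ = 1 := hint
    have hCle : Cmin * ENNReal.ofReal (M+2) ≤ 1 := by
      rcases ht₀ with he | he
      · have h3 := hIoo (-1) t₀ (by rw [he]; linarith)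
          (fun t ht => hlow t (Or.inl ⟨he, ht⟩))
        rw [he] at h3
        rw [show M+1-(-1:ℝ) = M+2 by ring] at h3
        exact h3
      · have h3 := hIoo t₀ 1 (by rw [he]; linarith)
          (fun t ht => hlow t (Or.inr ⟨he, ht⟩))
        rw [he] at h3
        rw [show (1:ℝ)-(-(M+1)) = M+2 by ring] at h3
        exact h3
    have hCmin_le : Cmin ≤ ENNReal.ofReal (1/(M+2)) := by
      have hne0 : ENNReal.ofReal (M+2) ≠ 0 := ne_of_gt (ENNReal.ofReal_pos.2 (by linarith))
      have hneT : ENNReal.ofReal (M+2) ≠ ⊤ := ENNReal.ofReal_ne_top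
      have h2 : Cmin ≤ 1 / ENNReal.ofReal (M+2) :=
        (ENNReal.le_div_iff_mul_le (Or.inl hne0) (Or.inl hneT)).2 hCle
      rwa [one_div, ← ENNReal.ofReal_inv_of_pos (by linarith), ← one_div] at h2
    rcases le_total (ENNReal.ofReal (1/M)) (p t₀) with hcase | hcase
    · rw [hCmin, min_eq_left hcase] at hCmin_le
      have : (1:ℝ)/(M+2) < 1/M := hc1.trans hc2
      exact absurd hCmin_le (not_le.2 ((ENNReal.ofReal_lt_ofReal_iff h1M).2 this)).elim
    · rwa [hCmin, min_eq_right hcase] at hCmin_le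
  -- φ(±(M+1)) ≤ y₁
  have hφx₁ : ∀ t₀ : ℝ, (t₀ = M+1 ∨ t₀ = -(M+1)) → φ t₀ ≤ (y₁ : EReal) := by
    intro t₀ ht₀
    by_contra hcon
    push_neg at hcon
    have h1 : g y₁ ≤ p t₀ := by rw [hpφ t₀]; exact h.mono hcon.le
    exact lt_irrefl _ (hgy₁.trans_le (h1.trans (hKey t₀ ht₀)))
  have hX₀1 : M + 2 ≤ X₀ := le_trans (le_max_left _ _) (le_max_left _ _)
  have hX₀2 : (y₀ - min Y₁ (-1))/s + 1 ≤ X₀ := le_trans (le_max_right _ _) (le_max_left _ _)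
  have hX₀3 : 2*(1+s+y₀)/s ≤ X₀ := le_trans (le_max_left _ _) (le_max_right _ _)
  have habs0 : (0:ℝ) ≤ |x| := abs_nonneg x
  rw [hL2M]
  by_cases hbig : X₀ ≤ |x|
  · have hM1 : (1:ℝ) < M+1 := by linarith
    have hφx : φ x ≤ ((y₀ - s*(|x|-1) : ℝ) : EReal) := by
      rcases le_or_gt 0 x with hx0 | hx0
      · have hxabs : |x| = x := abs_of_nonneg hx0
        have hxgt : M+1 < x := by rw [hxabs] at hbig; linarith
        have h1 := concaveE_extrap hφ hM1 hxgt (hφ1 1 (by norm_num)).le (hφtop 1)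
          (hφx₁ (M+1) (Or.inl rfl)) (hφtop x)
        refine h1.trans (le_of_eq ?_)
        norm_cast
        rw [hxabs, show M+1-(1:ℝ) = M from by ring, hsdef, hy₀def, hy₁def]
        ring
      · have hxabs : |x| = -x := abs_of_neg hx0
        have hxgt : M+1 < -x := by rw [hxabs] at hbig; linarith
        have hψ := concaveE_neg hφ
        have hA1 : (y₀:EReal) ≤ (fun t => φ (-t)) 1 := by
          simpa using (hφ1 (-1) (by norm_num)).le
        have hB1 : (fun t => φ (-t)) (M+1) ≤ (y₁:EReal) := by
          simpa using hφx₁ (-(M+1)) (Or.inr rfl)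
        have h1 := concaveE_extrap hψ hM1 hxgt hA1 (by simpa using hφtop (-1)) hB1
          (by simpa using hφtop x)
        simp only [neg_neg] at h1
        refine h1.trans (le_of_eq ?_)
        norm_cast
        rw [hxabs, show M+1-(1:ℝ) = M from by ring, hsdef, hy₀def, hy₁def]
        ring
    set r : ℝ := y₀ - s*(|x|-1) with hrdef
    have hrY : r ≤ min Y₁ (-1) := by
      have h2 : (y₀ - min Y₁ (-1))/s ≤ |x| - 1 := by linarith
      rw [div_le_iff₀ hs] at h2
      rw [hrdef]
      nlinarith
    have hr1 : r ≤ -1 := le_trans hrY (min_le_right _ _)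
    have hrY₁ : r ≤ Y₁ := le_trans hrY (min_le_left _ _)
    have hrabs : |r| = s*(|x|-1) - y₀ := by
      rw [abs_of_neg (by linarith), hrdef]; ring
    have hpx : p x ≤ ENNReal.ofReal (1 * |r| ^ (-α)) := by
      rw [hpφ x]
      exact le_trans (h.mono hφx) (hY₁ r hrY₁)
    rw [one_mul] at hpx
    have hpos : (0:ℝ) < 1 + s/2 * |x| := by nlinarith
    have hgi : 1 + s/2 * |x| ≤ s*(|x|-1) - y₀ := by
      have h2 : 2*(1+s+y₀)/s ≤ |x| := le_trans hX₀3 hbig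
      rw [div_le_iff₀ hs] at h2
      exact aux_lin s y₀ |x| hs h2
    have h3 : |r| ^ (-α) ≤ (1 + s/2 * |x|) ^ (-α) := by
      rw [hrabs]
      exact Real.rpow_le_rpow_of_nonpos hpos hgi (by linarith)
    refine hpx.trans (ENNReal.ofReal_le_ofReal ?_)
    calc |r| ^ (-α) ≤ (1 + s/2*|x|)^(-α) := h3
      _ ≤ D * (1 + s/2*|x|)^(-α) :=
          le_mul_of_one_le_left (Real.rpow_nonneg hpos.le _) hD1
  · push_neg at hbig
    refine (hle x).trans (ENNReal.ofReal_le_ofReal ?_)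
    have hpos : (0:ℝ) < 1 + s/2*|x| := by nlinarith
    have h1 : (1 + s/2*|x|)^α ≤ (1 + s/2*X₀)^α := by
      apply Real.rpow_le_rpow hpos.le ?_ (by linarith)
      nlinarith [hbig.le]
    have h2 : M * (1 + s/2*|x|)^α ≤ D :=
      le_trans (by nlinarith) (le_max_right _ _)
    have hposα : 0 < (1+s/2*|x|)^α := Real.rpow_pos_of_pos hpos α
    rw [Real.rpow_neg hpos.le, ← div_eq_mul_inv]
    exact (le_div_iff₀ hposα).2 h2
end

section
/- For any densities p, p₀ and p̄ = (p+p₀)/2, one has H(p, p₀) ≤ 4 H(p̄, p₀), and for brackets: H((l+p₀)/2, (u+p₀)/2) ≤ (1/√2) H(l, u) for nonnegative functions l ≤ u. -/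
open MeasureTheory

lemma vdg_alg1 (x y w : ℝ) (hx : 0 ≤ x) (hy : 0 ≤ y) (hw : 0 ≤ w)
    (h : 2 * w ^ 2 = x ^ 2 + y ^ 2) :
    (x - y) ^ 2 ≤ 16 * (w - y) ^ 2 := by
  have hwxy : w ≤ x + y := by
    nlinarith [sq_nonneg (x + y), mul_nonneg hx hy, sq_nonneg (w - x - y)]
  nlinarith [sq_nonneg ((x - y) - 4 * (w - y)), sq_nonneg ((x - y) + 4 * (w - y)),
    mul_nonneg hx hy, sq_nonneg (w - y), mul_nonneg (mul_nonneg hx hy) hw,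
    sq_nonneg (x + y - 2 * w)]

lemma vdg_alg2 (x y z v w : ℝ) (hv : 0 ≤ v) (hw : 0 ≤ w)
    (h1 : 2 * v ^ 2 = x ^ 2 + z ^ 2) (h2 : 2 * w ^ 2 = y ^ 2 + z ^ 2) :
    (v - w) ^ 2 ≤ (1 / 2) * (y - x) ^ 2 := by
  nlinarith [sq_nonneg (v + w - x - y), sq_nonneg (v - w), mul_nonneg hv hw,
    sq_nonneg (v + w), sq_nonneg (x + y - v - w)]

/-- Hellinger distance: `H(p,q)² = (1/2)∫(√p − √q)² dλ`. -/
noncomputable def Hdist (p q : ℝ → ℝ) : ℝ :=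
  Real.sqrt ((1 / 2) * ∫ x, (Real.sqrt (p x) - Real.sqrt (q x)) ^ 2)

lemma vdg_key1 (a b : ℝ) (ha : 0 ≤ a) (hb : 0 ≤ b) :
    (Real.sqrt a - Real.sqrt b) ^ 2 ≤ 16 * (Real.sqrt ((a + b) / 2) - Real.sqrt b) ^ 2 := by
  set x := Real.sqrt a
  set y := Real.sqrt b
  set w := Real.sqrt ((a + b) / 2)
  have hx : 0 ≤ x := Real.sqrt_nonneg _
  have hy : 0 ≤ y := Real.sqrt_nonneg _
  have hw : 0 ≤ w := Real.sqrt_nonneg _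
  have hx2 : x ^ 2 = a := Real.sq_sqrt ha
  have hy2 : y ^ 2 = b := Real.sq_sqrt hb
  have hw2 : w ^ 2 = (a + b) / 2 := Real.sq_sqrt (by linarith)
  have h : 2 * w ^ 2 = x ^ 2 + y ^ 2 := by rw [hx2, hy2, hw2]; ring
  exact vdg_alg1 x y w hx hy hw h

lemma vdg_key2 (a b c : ℝ) (ha : 0 ≤ a) (hab : a ≤ b) (hc : 0 ≤ c) :
    (Real.sqrt ((a + c) / 2) - Real.sqrt ((b + c) / 2)) ^ 2 ≤
      (1 / 2) * (Real.sqrt a - Real.sqrt b) ^ 2 := by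
  set x := Real.sqrt a
  set y := Real.sqrt b
  set z := Real.sqrt c
  set v := Real.sqrt ((a + c) / 2)
  set w := Real.sqrt ((b + c) / 2)
  have hb : 0 ≤ b := ha.trans hab
  have hx : 0 ≤ x := Real.sqrt_nonneg _
  have hy : 0 ≤ y := Real.sqrt_nonneg _
  have hv : 0 ≤ v := Real.sqrt_nonneg _
  have hw : 0 ≤ w := Real.sqrt_nonneg _
  have hx2 : x ^ 2 = a := Real.sq_sqrt ha
  have hy2 : y ^ 2 = b := Real.sq_sqrt hb
  have hz2 : z ^ 2 = c := Real.sq_sqrt hc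
  have hv2 : v ^ 2 = (a + c) / 2 := Real.sq_sqrt (by linarith)
  have hw2 : w ^ 2 = (b + c) / 2 := Real.sq_sqrt (by linarith)
  have hxy : x ≤ y := Real.sqrt_le_sqrt hab
  have h1 : 2 * v ^ 2 = x ^ 2 + z ^ 2 := by rw [hx2, hz2, hv2]; ring
  have h2 : 2 * w ^ 2 = y ^ 2 + z ^ 2 := by rw [hy2, hz2, hw2]; ring
  have := vdg_alg2 x y z v w hv hw h1 h2
  nlinarith [this]

lemma vdg_sq_bound (a b : ℝ) (ha : 0 ≤ a) (hb : 0 ≤ b) :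
    (Real.sqrt a - Real.sqrt b) ^ 2 ≤ a + b := by
  have := mul_nonneg (Real.sqrt_nonneg a) (Real.sqrt_nonneg b)
  nlinarith [Real.sq_sqrt ha, Real.sq_sqrt hb]

lemma vdg_meas (p q : ℝ → ℝ) (hp : AEStronglyMeasurable p volume)
    (hq : AEStronglyMeasurable q volume) :
    AEStronglyMeasurable (fun x => (Real.sqrt (p x) - Real.sqrt (q x)) ^ 2) volume := by
  exact ((Real.continuous_sqrt.comp_aestronglyMeasurable hp).sub
    (Real.continuous_sqrt.comp_aestronglyMeasurable hq)).pow 2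

lemma vdg_integrable (p q : ℝ → ℝ) (hp : ∀ x, 0 ≤ p x) (hq : ∀ x, 0 ≤ q x)
    (hip : Integrable p) (hiq : Integrable q) :
    Integrable (fun x => (Real.sqrt (p x) - Real.sqrt (q x)) ^ 2) := by
  refine (hip.add hiq).mono' (vdg_meas p q hip.1 hiq.1) ?_
  filter_upwards with x
  rw [Real.norm_of_nonneg (sq_nonneg _)]
  exact vdg_sq_bound _ _ (hp x) (hq x)

/-- van de Geer's convexity inequalities: with `p̄ = (p+p₀)/2`,
`H(p, p₀) ≤ 4 H(p̄, p₀)`, and for brackets `l ≤ u`,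
`H((l+p₀)/2, (u+p₀)/2) ≤ (1/√2) H(l, u)`. -/
theorem hellinger_convexity_trick (p p₀ l u : ℝ → ℝ)
    (hp : ∀ x, 0 ≤ p x) (hp₀ : ∀ x, 0 ≤ p₀ x)
    (hl : ∀ x, 0 ≤ l x) (hlu : ∀ x, l x ≤ u x)
    (hip : Integrable p) (hip₀ : Integrable p₀)
    (hil : Integrable l) (hiu : Integrable u) :
    Hdist p p₀ ≤ 4 * Hdist (fun x => (p x + p₀ x) / 2) p₀ ∧
    Hdist (fun x => (l x + p₀ x) / 2) (fun x => (u x + p₀ x) / 2) ≤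
      (1 / Real.sqrt 2) * Hdist l u := by
  constructor
  · -- first inequality
    have hbar : ∀ x, 0 ≤ (p x + p₀ x) / 2 := fun x => by linarith [hp x, hp₀ x]
    have hibar : Integrable (fun x => (p x + p₀ x) / 2) := (hip.add hip₀).div_const 2
    have hmono : ∫ x, (Real.sqrt (p x) - Real.sqrt (p₀ x)) ^ 2 ≤
        ∫ x, 16 * (Real.sqrt ((p x + p₀ x) / 2) - Real.sqrt (p₀ x)) ^ 2 := by
      refine integral_mono_of_nonneg ?_ ((vdg_integrable _ _ hbar hp₀ hibar hip₀).const_mul 16) ?_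
      · filter_upwards with x using sq_nonneg _
      · filter_upwards with x using vdg_key1 (p x) (p₀ x) (hp x) (hp₀ x)
    rw [integral_const_mul] at hmono
    have hI : 0 ≤ ∫ x, (Real.sqrt ((p x + p₀ x) / 2) - Real.sqrt (p₀ x)) ^ 2 :=
      integral_nonneg fun x => sq_nonneg _
    unfold Hdist
    rw [show (4 : ℝ) = Real.sqrt 16 by rw [show (16:ℝ) = 4^2 by norm_num, Real.sqrt_sq]; norm_num,
      ← Real.sqrt_mul (by norm_num : (0:ℝ) ≤ 16)]
    apply Real.sqrt_le_sqrt
    nlinarith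
  · -- second inequality
    have hu0 : ∀ x, 0 ≤ u x := fun x => (hl x).trans (hlu x)
    have ha : ∀ x, 0 ≤ (l x + p₀ x) / 2 := fun x => by linarith [hl x, hp₀ x]
    have hb : ∀ x, 0 ≤ (u x + p₀ x) / 2 := fun x => by linarith [hu0 x, hp₀ x]
    have hia : Integrable (fun x => (l x + p₀ x) / 2) := (hil.add hip₀).div_const 2
    have hib : Integrable (fun x => (u x + p₀ x) / 2) := (hiu.add hip₀).div_const 2
    have hmono : ∫ x, (Real.sqrt ((l x + p₀ x) / 2) - Real.sqrt ((u x + p₀ x) / 2)) ^ 2 ≤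
        ∫ x, (1 / 2) * (Real.sqrt (l x) - Real.sqrt (u x)) ^ 2 := by
      refine integral_mono_of_nonneg ?_
        ((vdg_integrable _ _ hl hu0 hil hiu).const_mul (1 / 2)) ?_
      · filter_upwards with x using sq_nonneg _
      · filter_upwards with x using vdg_key2 (l x) (u x) (p₀ x) (hl x) (hlu x) (hp₀ x)
    rw [integral_const_mul] at hmono
    have hI : 0 ≤ ∫ x, (Real.sqrt (l x) - Real.sqrt (u x)) ^ 2 :=
      integral_nonneg fun x => sq_nonneg _
    unfold Hdist
    rw [show (1 / Real.sqrt 2 : ℝ) = Real.sqrt (1 / 2) by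
        rw [show (1/2:ℝ) = 2⁻¹ by norm_num, Real.sqrt_inv, one_div],
      ← Real.sqrt_mul (by norm_num : (0:ℝ) ≤ 1/2)]
    apply Real.sqrt_le_sqrt
    nlinarith
end
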